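/- arXiv:2603.07592 — 2 statements merged into one kernel-verified Lean document; each statement's English description precedes it below -/
import Mathlib

section
/- Let m be a positive integer and let a be a real number such that a^k ≠ 1 for every integer k with 1 ≤ k ≤ m. Then the finite sum of Euler's series, ∑_{k=1}^{m} ( ∏_{j=0}^{k-1} (1 − a^{m−j}) ) / (1 − a^k), equals m. -/
/-!
Write `P m k = ∏_{j<k} (1 - a^(m-j))`. Splitting off the factor `1 - a^(m+1)` of
`P (m+1) (k+1)` as `(1 - a^(m-k)) + a^(m-k) (1 - a^(k+1))` gives
`P (m+1) (k+1) / (1 - a^(k+1)) = P m (k+1) / (1 - a^(k+1)) + a^(m-k) P m k`,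
so passing from `m` to `m + 1` adds `∑_{k ≤ m} a^(m-k) P m k` to the sum. This telescopes to
`1 - P m (m+1) = 1`, because `P m (m+1)` contains the factor `1 - a^0`.
-/

open Finset

section CommRing

variable {R : Type*} [CommRing R]

/-- The exponent `m - j` is truncated; this only matters once `k > m`, where the factor at
`j = m` already vanishes. -/
def eulerProd (a : R) (m k : ℕ) : R :=
  ∏ j ∈ range k, (1 - a ^ (m - j))

theorem eulerProd_succ (a : R) (m k : ℕ) :
    eulerProd a m (k + 1) = eulerProd a m k * (1 - a ^ (m - k)) :=
  prod_range_succ _ _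

theorem eulerProd_eq_zero_of_lt (a : R) {m k : ℕ} (h : m < k) : eulerProd a m k = 0 :=
  prod_eq_zero (mem_range.2 h) (by simp)

theorem sum_pow_mul_eulerProd (a : R) (m n : ℕ) :
    ∑ i ∈ range n, a ^ (m - i) * eulerProd a m i = 1 - eulerProd a m n := by
  calc ∑ i ∈ range n, a ^ (m - i) * eulerProd a m i
      = ∑ i ∈ range n, (eulerProd a m i - eulerProd a m (i + 1)) :=
        sum_congr rfl fun i _ => by rw [eulerProd_succ]; ring
    _ = 1 - eulerProd a m n := by rw [sum_range_sub', eulerProd, prod_range_zero]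

theorem eulerProd_succ_succ (a : R) {m k : ℕ} (hk : k ≤ m) :
    eulerProd a (m + 1) (k + 1) =
      eulerProd a m (k + 1) + a ^ (m - k) * (1 - a ^ (k + 1)) * eulerProd a m k := by
  have hsplit : 1 - a ^ (m + 1) = (1 - a ^ (m - k)) + a ^ (m - k) * (1 - a ^ (k + 1)) := by
    rw [mul_sub, ← pow_add, show m - k + (k + 1) = m + 1 by omega]
    ring
  rw [eulerProd, prod_range_succ', eulerProd_succ]
  simp only [Nat.add_sub_add_right, Nat.sub_zero, hsplit]
  rw [eulerProd]
  ring

end CommRing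

section Field

variable {K : Type*} [Field K]

def eulerSum (a : K) (m : ℕ) : K :=
  ∑ k ∈ range m, eulerProd a m (k + 1) / (1 - a ^ (k + 1))

theorem eulerProd_succ_succ_div {a : K} {m k : ℕ} (hk : k ≤ m) (ha : a ^ (k + 1) ≠ 1) :
    eulerProd a (m + 1) (k + 1) / (1 - a ^ (k + 1)) =
      eulerProd a m (k + 1) / (1 - a ^ (k + 1)) + a ^ (m - k) * eulerProd a m k := by
  have hden : 1 - a ^ (k + 1) ≠ 0 := sub_ne_zero.2 ha.symm
  rw [eulerProd_succ_succ a hk]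
  field_simp

theorem eulerSum_succ {a : K} {m : ℕ} (ha : ∀ k, 1 ≤ k → k ≤ m + 1 → a ^ k ≠ 1) :
    eulerSum a (m + 1) = eulerSum a m + 1 := by
  have hterm : ∀ k ∈ range (m + 1), eulerProd a (m + 1) (k + 1) / (1 - a ^ (k + 1)) =
      eulerProd a m (k + 1) / (1 - a ^ (k + 1)) + a ^ (m - k) * eulerProd a m k := by
    intro k hk
    have hkm : k ≤ m := Nat.lt_succ_iff.1 (mem_range.1 hk)
    exact eulerProd_succ_succ_div hkm (ha (k + 1) k.succ_pos (by omega))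
  rw [eulerSum, sum_congr rfl hterm, sum_add_distrib, sum_pow_mul_eulerProd, sum_range_succ,
    eulerProd_eq_zero_of_lt a m.lt_succ_self, eulerSum]
  ring

theorem eulerSum_eq {a : K} {m : ℕ} (ha : ∀ k, 1 ≤ k → k ≤ m → a ^ k ≠ 1) :
    eulerSum a m = m := by
  induction m with
  | zero => simp [eulerSum]
  | succ m ih =>
    rw [eulerSum_succ ha, ih fun k hk hkm => ha k hk (hkm.trans m.le_succ)]
    push_cast
    ring

end Field

theorem euler_series_finite_sum_general (m : ℕ) (a : ℝ)
    (ha : ∀ k : ℕ, 1 ≤ k → k ≤ m → a ^ k ≠ 1) :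
    ∑ k ∈ Finset.Icc 1 m,
      (∏ j ∈ Finset.range k, (1 - a ^ ((m : ℤ) - (j : ℤ)))) / (1 - a ^ k) = m := by
  have hprod : ∀ k ∈ Icc 1 m,
      ∏ j ∈ range k, (1 - a ^ ((m : ℤ) - (j : ℤ))) = eulerProd a m k :=
    fun k hk => prod_congr rfl fun j hj => by
      have : j ≤ m := by simp only [mem_Icc, mem_range] at hk hj; omega
      rw [← Nat.cast_sub this, zpow_natCast]
  rw [sum_congr rfl fun k hk => by rw [hprod k hk], ← eulerSum_eq ha, eulerSum,
    ← Ico_add_one_right_eq_Icc, sum_Ico_eq_sum_range]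
  simp only [Nat.add_sub_cancel, add_comm 1]

/-- Euler's series truncated at `m`: for a positive integer `m` and a real `a`
with `a ^ k ≠ 1` for all `1 ≤ k ≤ m`, the finite sum
`∑_{k=1}^{m} (∏_{j=0}^{k-1} (1 − a^{m−j})) / (1 − a^k)` equals `m`. -/
theorem euler_series_finite_sum (m : ℕ) (hm : 0 < m) (a : ℝ)
    (ha : ∀ k : ℕ, 1 ≤ k → k ≤ m → a ^ k ≠ 1) :
    ∑ k ∈ Finset.Icc 1 m,
      (∏ j ∈ Finset.range k, (1 - a ^ ((m : ℤ) - (j : ℤ)))) / (1 - a ^ k) = m :=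
  euler_series_finite_sum_general m a ha
end

section
/- Let m be a positive integer and let a be a real number. For every integer k with k ≥ m + 1, the numerator of the k-th term of Euler's series vanishes: ∏_{j=0}^{k-1} (1 − a^{m−j}) = 0. Consequently, if in addition a^k ≠ 1 for every integer k with 1 ≤ k ≤ m, the infinite series ∑_{k=1}^{∞} ( ∏_{j=0}^{k-1} (1 − a^{m−j}) ) / (1 − a^k) converges and its sum equals m. -/
/-!
Write `P_m(n) = ∏_{i<n} (1 - a^{m-i})` for the numerators. Splitting
`1 - a^{m+1} = (1 - a^{m-k}) + a^{m-k} (1 - a^{k+1})` shows that the `k`-th term of the series for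
`m + 1` is the `k`-th term for `m` plus `P_m(k) - P_m(k+1)`. These differences telescope to
`1 - P_m(m)`, and the one new term is `P_m(m)`, so passing from `m` to `m + 1` raises the sum by
exactly one.
-/

open Finset

section EulerNumerator

variable {R : Type*} [CommRing R] (a : R)

/-- Truncated subtraction in `m - i` is harmless: once `n > m` the factor `i = m` vanishes. -/
def eulerNumerator (m n : ℕ) : R :=
  ∏ i ∈ range n, (1 - a ^ (m - i))

@[simp]
theorem eulerNumerator_zero (m : ℕ) : eulerNumerator a m 0 = 1 :=
  prod_range_zero _

theorem eulerNumerator_succ (m n : ℕ) :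
    eulerNumerator a m (n + 1) = eulerNumerator a m n * (1 - a ^ (m - n)) :=
  prod_range_succ _ _

theorem eulerNumerator_succ_succ (m n : ℕ) :
    eulerNumerator a (m + 1) (n + 1) = (1 - a ^ (m + 1)) * eulerNumerator a m n := by
  rw [eulerNumerator, prod_range_succ', mul_comm]
  simp [eulerNumerator]

theorem eulerNumerator_succ_left {m k : ℕ} (hk : k < m) :
    eulerNumerator a (m + 1) (k + 1) =
      eulerNumerator a m (k + 1) +
        (1 - a ^ (k + 1)) * (eulerNumerator a m k - eulerNumerator a m (k + 1)) := by
  have hpow : a ^ (k + 1) * a ^ (m - k) = a ^ (m + 1) := by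
    rw [← pow_add]; congr 1; omega
  rw [eulerNumerator_succ_succ, eulerNumerator_succ]
  linear_combination eulerNumerator a m k * hpow

end EulerNumerator

theorem sum_range_eulerNumerator_div {K : Type*} [Field K] (a : K) (m : ℕ)
    (h : ∀ k : ℕ, 1 ≤ k → k ≤ m → a ^ k ≠ 1) :
    ∑ k ∈ range m, eulerNumerator a m (k + 1) / (1 - a ^ (k + 1)) = m := by
  induction m with
  | zero => simp
  | succ m ih =>
    have hden : ∀ k ≤ m, (1 : K) - a ^ (k + 1) ≠ 0 := fun k hk =>
      sub_ne_zero.mpr (h (k + 1) (by omega) (by omega)).symm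
    have hterm : ∀ k ∈ range m,
        eulerNumerator a (m + 1) (k + 1) / (1 - a ^ (k + 1)) =
          eulerNumerator a m (k + 1) / (1 - a ^ (k + 1)) +
            (eulerNumerator a m k - eulerNumerator a m (k + 1)) := by
      intro k hk
      have hk := mem_range.mp hk
      rw [eulerNumerator_succ_left a hk, add_div, mul_div_cancel_left₀ _ (hden k hk.le)]
    rw [sum_range_succ, sum_congr rfl hterm, sum_add_distrib, ih fun k h1 h2 => h k h1 (by omega),
      sum_range_sub', eulerNumerator_succ_succ, mul_div_cancel_left₀ _ (hden m le_rfl),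
      eulerNumerator_zero, Nat.cast_succ]
    ring

theorem prod_range_one_sub_zpow_eq_eulerNumerator {K : Type*} [Field K] (a : K)
    {m n : ℕ} (hn : n ≤ m + 1) :
    ∏ j ∈ range n, (1 - a ^ ((m : ℤ) - (j : ℤ))) = eulerNumerator a m n := by
  refine prod_congr rfl fun j hj => ?_
  rw [← Nat.cast_sub (by simp at hj; omega), zpow_natCast]

theorem euler_series_infinite_sum_general (m : ℕ) (a : ℝ) :
    (∀ k : ℕ, m + 1 ≤ k →
      ∏ j ∈ Finset.range k, (1 - a ^ ((m : ℤ) - (j : ℤ))) = 0) ∧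
    ((∀ k : ℕ, 1 ≤ k → k ≤ m → a ^ k ≠ 1) →
      HasSum (fun k : ℕ =>
        (∏ j ∈ Finset.range (k + 1), (1 - a ^ ((m : ℤ) - (j : ℤ)))) / (1 - a ^ (k + 1)))
        (m : ℝ)) := by
  have hzero : ∀ k : ℕ, m + 1 ≤ k →
      ∏ j ∈ range k, (1 - a ^ ((m : ℤ) - (j : ℤ))) = 0 :=
    fun k hk => prod_eq_zero (mem_range.mpr (by omega : m < k)) (by simp)
  refine ⟨hzero, fun h => ?_⟩
  have hvanish : ∀ k ∉ range m,
      (∏ j ∈ range (k + 1), (1 - a ^ ((m : ℤ) - (j : ℤ)))) / (1 - a ^ (k + 1)) = 0 :=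
    fun k hk => by rw [hzero (k + 1) (by simpa using hk), zero_div]
  convert hasSum_sum_of_ne_finset_zero (L := SummationFilter.unconditional ℕ) hvanish using 1
  rw [← sum_range_eulerNumerator_div a m h]
  refine sum_congr rfl fun k hk => ?_
  rw [prod_range_one_sub_zpow_eq_eulerNumerator a (by simp at hk; omega)]

/-- For a positive integer `m` and any real `a`, every term of Euler's series with
index `k ≥ m + 1` has vanishing numerator `∏_{j=0}^{k-1} (1 − a^{m−j}) = 0`;
consequently, if moreover `a ^ k ≠ 1` for all `1 ≤ k ≤ m`, the infinite series
`∑_{k=1}^{∞} (∏_{j=0}^{k-1} (1 − a^{m−j})) / (1 − a^k)` converges with sum `m`. -/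
theorem euler_series_infinite_sum (m : ℕ) (hm : 0 < m) (a : ℝ) :
    (∀ k : ℕ, m + 1 ≤ k →
      ∏ j ∈ Finset.range k, (1 - a ^ ((m : ℤ) - (j : ℤ))) = 0) ∧
    ((∀ k : ℕ, 1 ≤ k → k ≤ m → a ^ k ≠ 1) →
      HasSum (fun k : ℕ =>
        (∏ j ∈ Finset.range (k + 1), (1 - a ^ ((m : ℤ) - (j : ℤ)))) / (1 - a ^ (k + 1)))
        (m : ℝ)) :=
  euler_series_infinite_sum_general m a
end
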